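/- For every function f in the class ℱ, the second logarithmic coefficient satisfies |γ₂| ≤ 1/2. -/

import Mathlib

/-!
Write `z f' = g p` and `z g' = g q`, where `p` and `q` have positive real part and
`p 0 = q 0 = 1`. Oddness of `g` makes `g z / z` even, which forces `q'(0) = 0` and ties the
second coefficient of `g z / z` to `q''(0)`. Comparing coefficients then gives
`γ₂ = (p''(0) - p'(0)²) / 12 + p'(0)² / 48 + q''(0) / 24`.
The sharpened Carathéodory inequality `|p''(0) - p'(0)²| ≤ 4 - |p'(0)|²` (the Schwarz–Pick
inequality at `0` for `w z / z`, where `w = (p - 1) / (p + 1)`), together with `|q''(0)| ≤ 4`,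
yields `|γ₂| ≤ 1/2 - |p'(0)|² / 16`.
-/

open Complex Metric

/-- The `n`-th logarithmic coefficient `γₙ` of `f`, computed from an analytic branch `h`
of `log (f z / z)` with `h 0 = 0`: it is half the `n`-th Taylor coefficient of `h` at `0`. -/
noncomputable def logCoeff (h : ℂ → ℂ) (n : ℕ) : ℂ :=
  iteratedDeriv n h 0 / (2 * (n.factorial : ℂ))

/-- `g` is an odd starlike function on the unit disk. -/
def IsOddStarlike (g : ℂ → ℂ) : Prop :=
  AnalyticOnNhd ℂ g (ball (0:ℂ) 1) ∧ g 0 = 0 ∧ deriv g 0 = 1 ∧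
    (∀ z ∈ ball (0:ℂ) 1, z ≠ 0 → 0 < (z * deriv g z / g z).re) ∧
    (∀ z ∈ ball (0:ℂ) 1, g (-z) = -g z)

/-- `f` belongs to the class ℱ of close-to-convex functions with argument `0`
with respect to odd starlike functions. -/
def MemClassF (f : ℂ → ℂ) : Prop :=
  AnalyticOnNhd ℂ f (ball (0:ℂ) 1) ∧ f 0 = 0 ∧ deriv f 0 = 1 ∧
    ∃ g : ℂ → ℂ, IsOddStarlike g ∧
      ∀ z ∈ ball (0:ℂ) 1, z ≠ 0 → 0 < (z * deriv f z / g z).re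

/-- `h` is an analytic branch of `log (f z / z)` on the unit disk with `h 0 = 0`. -/
def IsLogBranch (f h : ℂ → ℂ) : Prop :=
  AnalyticOnNhd ℂ h (ball (0:ℂ) 1) ∧ h 0 = 0 ∧
    ∀ z ∈ ball (0:ℂ) 1, z ≠ 0 → Complex.exp (h z) = f z / z

open Filter Set
open scoped Topology ComplexConjugate

section Calculus

variable {𝕜 : Type*} [NontriviallyNormedField 𝕜] {a b : 𝕜 → 𝕜} {x : 𝕜}

theorem iteratedDeriv_two_fun_mul (ha : ContDiffAt 𝕜 2 a x) (hb : ContDiffAt 𝕜 2 b x) :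
    iteratedDeriv 2 (fun z => a z * b z) x =
      iteratedDeriv 2 a x * b x + 2 * deriv a x * deriv b x + a x * iteratedDeriv 2 b x := by
  rw [iteratedDeriv_fun_mul ha hb]
  simp only [Nat.reduceAdd, Finset.sum_range_succ, Finset.range_one, Finset.sum_singleton,
    Nat.choose_zero_right, Nat.cast_one, iteratedDeriv_zero, one_mul, tsub_zero,
    Nat.choose_succ_self_right, Nat.cast_ofNat, iteratedDeriv_one, Nat.add_one_sub_one,
    Nat.choose_self, tsub_self]
  ring

theorem iteratedDeriv_succ_fun_id_mul_zero {n : ℕ} (ha : ContDiffAt 𝕜 (n + 1) a 0) :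
    iteratedDeriv (n + 1) (fun z => z * a z) 0 = (n + 1) * iteratedDeriv n a 0 := by
  rw [iteratedDeriv_fun_mul contDiffAt_fun_id ha, Finset.sum_eq_single 1]
  · simp
  · intro i _ hi
    simp [iteratedDeriv_fun_id_zero, hi]
  · simp

theorem iteratedDeriv_two_and_three_of_deriv_eq_mul {u P G : 𝕜 → 𝕜} (hP : ContDiffAt 𝕜 2 P 0)
    (hG : ContDiffAt 𝕜 2 G 0) (hu : deriv u =ᶠ[𝓝 0] fun z => P z * G z) (hP0 : P 0 = 1)
    (hG0 : G 0 = 1) (hG1 : deriv G 0 = 0) :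
    iteratedDeriv 2 u 0 = deriv P 0 ∧
      iteratedDeriv 3 u 0 = iteratedDeriv 2 P 0 + iteratedDeriv 2 G 0 := by
  constructor
  · rw [iteratedDeriv_succ', iteratedDeriv_one, hu.deriv_eq,
      deriv_fun_mul (hP.differentiableAt two_ne_zero) (hG.differentiableAt two_ne_zero),
      hP0, hG0, hG1]
    ring
  · rw [iteratedDeriv_succ', hu.iteratedDeriv_eq, iteratedDeriv_two_fun_mul hP hG, hP0, hG0, hG1]
    ring

theorem deriv_and_iteratedDeriv_two_of_eq_one_add_mul {P w : 𝕜 → 𝕜} (hP : ContDiffAt 𝕜 2 P 0)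
    (hw : ContDiffAt 𝕜 2 w 0) (hPw : P =ᶠ[𝓝 0] fun z => 1 + w z * (1 + P z)) (hP0 : P 0 = 1)
    (hw0 : w 0 = 0) :
    deriv P 0 = 2 * deriv w 0 ∧ iteratedDeriv 2 P 0 - deriv P 0 ^ 2 = 2 * iteratedDeriv 2 w 0 := by
  have hP1 : ContDiffAt 𝕜 2 (fun z => 1 + P z) 0 := contDiffAt_const.add hP
  have hd1 : deriv P 0 = 2 * deriv w 0 := by
    rw [hPw.deriv_eq, deriv_const_add,
      deriv_fun_mul (hw.differentiableAt two_ne_zero) (hP1.differentiableAt two_ne_zero), hw0, hP0]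
    ring
  refine ⟨hd1, ?_⟩
  rw [hPw.iteratedDeriv_eq, iteratedDeriv_const_add two_pos, iteratedDeriv_two_fun_mul hw hP1,
    deriv_const_add, hw0, hP0, hd1]
  ring

theorem fun_id_mul_dslope_zero {g : 𝕜 → 𝕜} (hg0 : g 0 = 0) : (fun z => z * dslope g 0 z) = g :=
  funext fun z => by simpa using sub_smul_dslope_of_zero hg0 z

theorem dslope_zero_of_ne {g : 𝕜 → 𝕜} (hg0 : g 0 = 0) {z : 𝕜} (hz : z ≠ 0) :
    dslope g 0 z = g z / z := by
  rw [dslope_of_ne _ hz, slope_def_field, hg0, sub_zero, sub_zero]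

theorem deriv_dslope_zero_eq_zero_of_odd [CharZero 𝕜] {g : 𝕜 → 𝕜}
    (hodd : ∀ᶠ z in 𝓝 0, g (-z) = -g z) : deriv (dslope g 0) 0 = 0 := by
  have hg0 : g 0 = 0 := self_eq_neg.1 (by simpa using hodd.self_of_nhds)
  have heven : (fun z => dslope g 0 (-z)) =ᶠ[𝓝 0] dslope g 0 := by
    filter_upwards [hodd] with z hz
    rcases eq_or_ne z 0 with rfl | hz0
    · simp
    · rw [dslope_zero_of_ne hg0 hz0, dslope_zero_of_ne hg0 (neg_ne_zero.2 hz0), hz,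
        neg_div_neg_eq]
  have := heven.deriv_eq
  rw [deriv_comp_neg, neg_zero] at this
  exact neg_eq_self.1 this

end Calculus

theorem AnalyticOnNhd.dslope {g : ℂ → ℂ} {s : Set ℂ} {c : ℂ} (hg : AnalyticOnNhd ℂ g s)
    (hs : IsOpen s) (hc : c ∈ s) : AnalyticOnNhd ℂ (dslope g c) s :=
  ((Complex.differentiableOn_dslope (hs.mem_nhds hc)).2 hg.differentiableOn).analyticOnNhd hs

theorem iteratedDeriv_two_cexp_comp {h : ℂ → ℂ} {x : ℂ} (hh : AnalyticAt ℂ h x) :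
    iteratedDeriv 2 (fun z => exp (h z)) x =
      exp (h x) * (iteratedDeriv 2 h x + deriv h x ^ 2) := by
  have hderiv : deriv (fun z => exp (h z)) =ᶠ[𝓝 x] fun z => exp (h z) * deriv h z := by
    filter_upwards [hh.eventually_analyticAt] with z hz
    exact deriv_cexp hz.differentiableAt
  rw [iteratedDeriv_succ, iteratedDeriv_one, hderiv.deriv_eq,
    ((hh.differentiableAt.hasDerivAt.cexp).fun_mul hh.deriv.differentiableAt.hasDerivAt).deriv,
    iteratedDeriv_succ, iteratedDeriv_one]
  ring

theorem norm_sub_le_norm_one_sub_conj_mul {a w : ℂ} (ha : ‖a‖ ≤ 1) (hw : ‖w‖ ≤ 1) :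
    ‖w - a‖ ≤ ‖1 - conj a * w‖ := by
  rw [← sq_le_sq₀ (norm_nonneg _) (norm_nonneg _), Complex.sq_norm, Complex.sq_norm]
  have hdiff : normSq (1 - conj a * w) - normSq (w - a) = (1 - normSq a) * (1 - normSq w) := by
    simp only [normSq_apply, sub_re, sub_im, one_re, one_im, mul_re, mul_im, conj_re, conj_im]
    ring
  have ha' : normSq a ≤ 1 := by rw [← Complex.sq_norm]; exact pow_le_one₀ (norm_nonneg _) ha
  have hw' : normSq w ≤ 1 := by rw [← Complex.sq_norm]; exact pow_le_one₀ (norm_nonneg _) hw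
  nlinarith [mul_nonneg (sub_nonneg.2 ha') (sub_nonneg.2 hw')]

theorem one_sub_conj_mul_ne_zero {a w : ℂ} (ha : ‖a‖ < 1) (hw : ‖w‖ ≤ 1) : 1 - conj a * w ≠ 0 := by
  refine sub_ne_zero.2 fun h => ?_
  have : ‖conj a * w‖ < 1 := by
    rw [norm_mul, Complex.norm_conj]
    exact mul_lt_one_of_nonneg_of_lt_one_left (norm_nonneg _) ha hw
  rw [← h, norm_one] at this
  exact this.false

theorem norm_sub_one_le_norm_one_add {z : ℂ} (hz : 0 ≤ z.re) : ‖z - 1‖ ≤ ‖1 + z‖ := by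
  rw [← sq_le_sq₀ (norm_nonneg _) (norm_nonneg _), Complex.sq_norm, Complex.sq_norm]
  simp only [normSq_apply, sub_re, sub_im, add_re, add_im, one_re, one_im]
  nlinarith

section SchwarzPick

variable {φ : ℂ → ℂ} (hd : DifferentiableOn ℂ φ (ball 0 1))
  (hmaps : MapsTo φ (ball 0 1) (closedBall 0 1))
include hd hmaps

theorem deriv_zero_eq_zero_of_norm_eq_one (hφ0 : ‖φ 0‖ = 1) : deriv φ 0 = 0 := by
  have hmax : IsLocalMax (norm ∘ φ) 0 :=
    Filter.mem_of_superset (ball_mem_nhds 0 one_pos) fun z hz =>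
      (mem_closedBall_zero_iff.1 (hmaps hz)).trans hφ0.ge
  have hconst : φ =ᶠ[𝓝 0] fun _ => φ 0 := Complex.eventually_eq_of_isLocalMax_norm
    (hd.eventually_differentiableAt (ball_mem_nhds 0 one_pos)) hmax
  rw [hconst.deriv_eq, deriv_const]

theorem norm_deriv_zero_le_one_sub_sq : ‖deriv φ 0‖ ≤ 1 - ‖φ 0‖ ^ 2 := by
  have hle : ∀ z ∈ ball (0:ℂ) 1, ‖φ z‖ ≤ 1 := fun z hz => mem_closedBall_zero_iff.1 (hmaps hz)
  have h0 : (0:ℂ) ∈ ball (0:ℂ) 1 := mem_ball_self one_pos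
  rcases (hle 0 h0).lt_or_eq with ha | ha
  swap
  · rw [deriv_zero_eq_zero_of_norm_eq_one hd hmaps ha, norm_zero, ha]
    norm_num
  have hden : ∀ z ∈ ball (0:ℂ) 1, 1 - conj (φ 0) * φ z ≠ 0 := fun z hz =>
    one_sub_conj_mul_ne_zero ha (hle z hz)
  set ψ := fun z => (φ z - φ 0) / (1 - conj (φ 0) * φ z)
  have hψd : DifferentiableOn ℂ ψ (ball 0 1) := fun z hz =>
    ((hd z hz).sub_const (φ 0)).div (((hd z hz).const_mul _).const_sub 1) (hden z hz)
  have hψmaps : MapsTo ψ (ball 0 1) (closedBall (ψ 0) 1) := by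
    intro z hz
    rw [show ψ 0 = 0 by simp [ψ], mem_closedBall_zero_iff, norm_div,
      div_le_one (norm_pos_iff.2 (hden z hz))]
    exact norm_sub_le_norm_one_sub_conj_mul ha.le (hle z hz)
  have hψ' : deriv ψ 0 = deriv φ 0 / (1 - ‖φ 0‖ ^ 2 : ℝ) := by
    have hφ' : HasDerivAt φ (deriv φ 0) 0 :=
      (hd.differentiableAt (ball_mem_nhds 0 one_pos)).hasDerivAt
    have hψ0 : HasDerivAt ψ _ 0 := (hφ'.sub_const (φ 0)).div
      ((hφ'.const_mul (conj (φ 0))).const_sub 1) (hden 0 h0)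
    rw [hψ0.deriv, sub_self, zero_mul, sub_zero, sq, mul_div_mul_right _ _ (hden 0 h0),
      Complex.conj_mul']
    push_cast
    ring
  have := Complex.norm_deriv_le_one_of_mapsTo_ball hψd hψmaps one_pos
  have hpos : 0 < 1 - ‖φ 0‖ ^ 2 := by nlinarith [norm_nonneg (φ 0)]
  rwa [hψ', norm_div, Complex.norm_real, Real.norm_of_nonneg hpos.le, div_le_one hpos] at this

theorem norm_iteratedDeriv_two_zero_le (hφ0 : φ 0 = 0) :
    ‖iteratedDeriv 2 φ 0‖ ≤ 2 * (1 - ‖deriv φ 0‖ ^ 2) := by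
  set ψ := dslope φ 0
  have hψd : DifferentiableOn ℂ ψ (ball 0 1) :=
    (Complex.differentiableOn_dslope (ball_mem_nhds 0 one_pos)).2 hd
  have hψmaps : MapsTo ψ (ball 0 1) (closedBall 0 1) := fun z hz => by
    simpa using Complex.norm_dslope_le_div_of_mapsTo_ball hd (by rwa [hφ0]) hz
  have h2 : iteratedDeriv 2 φ 0 = 2 * deriv ψ 0 := by
    rw [← fun_id_mul_dslope_zero hφ0, iteratedDeriv_succ_fun_id_mul_zero
      (hψd.analyticAt (ball_mem_nhds 0 one_pos)).contDiffAt, iteratedDeriv_one]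
    norm_num
  rw [h2, norm_mul, Complex.norm_two, ← dslope_same φ 0]
  gcongr
  exact norm_deriv_zero_le_one_sub_sq hψd hψmaps

end SchwarzPick

structure IsCaratheodory (P : ℂ → ℂ) : Prop where
  analyticOnNhd : AnalyticOnNhd ℂ P (ball 0 1)
  apply_zero : P 0 = 1
  re_pos : ∀ z ∈ ball (0:ℂ) 1, 0 < (P z).re

theorem IsCaratheodory.norm_iteratedDeriv_two_sub_sq_le {P : ℂ → ℂ} (hP : IsCaratheodory P) :
    ‖iteratedDeriv 2 P 0 - deriv P 0 ^ 2‖ ≤ 4 - ‖deriv P 0‖ ^ 2 := by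
  have hne : ∀ z ∈ ball (0:ℂ) 1, 1 + P z ≠ 0 := fun z hz h => by
    have := congrArg re h
    simp only [add_re, one_re, zero_re] at this
    linarith [hP.re_pos z hz]
  set w := fun z => (P z - 1) / (1 + P z)
  have hPd := hP.analyticOnNhd.differentiableOn
  have hwd : DifferentiableOn ℂ w (ball 0 1) := fun z hz =>
    ((hPd z hz).sub_const 1).div ((hPd z hz).const_add 1) (hne z hz)
  have hwmaps : MapsTo w (ball 0 1) (closedBall 0 1) := fun z hz => by
    rw [mem_closedBall_zero_iff, norm_div, div_le_one (norm_pos_iff.2 (hne z hz))]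
    exact norm_sub_one_le_norm_one_add (hP.re_pos z hz).le
  have hw0 : w 0 = 0 := by simp [w, hP.apply_zero]
  have hPw : P =ᶠ[𝓝 0] fun z => 1 + w z * (1 + P z) := by
    filter_upwards [ball_mem_nhds (0:ℂ) one_pos] with z hz
    simp only [w]
    rw [div_mul_cancel₀ _ (hne z hz)]
    ring
  obtain ⟨hd1, hd2⟩ := deriv_and_iteratedDeriv_two_of_eq_one_add_mul
    (hP.analyticOnNhd 0 (mem_ball_self one_pos)).contDiffAt
    (hwd.analyticAt (ball_mem_nhds 0 one_pos)).contDiffAt hPw hP.apply_zero hw0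
  have hw2 := norm_iteratedDeriv_two_zero_le hwd hwmaps hw0
  rw [hd2, norm_mul, Complex.norm_two, hd1, norm_mul, Complex.norm_two]
  nlinarith

theorem dslope_zero_ne_zero_of_re_pos {g u : ℂ → ℂ} (hg0 : g 0 = 0) (hg'0 : deriv g 0 = 1)
    (hre : ∀ z ∈ ball (0:ℂ) 1, z ≠ 0 → 0 < (z * u z / g z).re) :
    ∀ z ∈ ball (0:ℂ) 1, dslope g 0 z ≠ 0 := by
  intro z hz
  rcases eq_or_ne z 0 with rfl | hz0
  · simp [hg'0]
  · intro h
    rw [dslope_zero_of_ne hg0 hz0, div_eq_zero_iff, or_iff_left hz0] at h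
    simpa [h] using hre z hz hz0

/-- `u z / dslope g 0 z` is `z * u z / g z` with its removable singularity at `0` filled in. -/
theorem isCaratheodory_div_dslope {g u : ℂ → ℂ} (hg : AnalyticOnNhd ℂ g (ball 0 1))
    (hg0 : g 0 = 0) (hg'0 : deriv g 0 = 1) (hu : AnalyticOnNhd ℂ u (ball 0 1)) (hu0 : u 0 = 1)
    (hre : ∀ z ∈ ball (0:ℂ) 1, z ≠ 0 → 0 < (z * u z / g z).re) :
    IsCaratheodory fun z => u z / dslope g 0 z where
  analyticOnNhd z hz := (hu z hz).div (hg.dslope isOpen_ball (mem_ball_self one_pos) z hz)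
    (dslope_zero_ne_zero_of_re_pos hg0 hg'0 hre z hz)
  apply_zero := by simp [hu0, hg'0]
  re_pos z hz := by
    rcases eq_or_ne z 0 with rfl | hz0
    · simp [hu0, hg'0]
    · rw [dslope_zero_of_ne hg0 hz0, div_div_eq_mul_div, mul_comm]
      exact hre z hz hz0

theorem IsLogBranch.iteratedDeriv_two_and_three {f h : ℂ → ℂ} (hh : IsLogBranch f h)
    (hf0 : f 0 = 0) :
    iteratedDeriv 2 f 0 = 2 * deriv h 0 ∧
      iteratedDeriv 3 f 0 = 3 * (iteratedDeriv 2 h 0 + deriv h 0 ^ 2) := by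
  obtain ⟨hha, hh0, hexp⟩ := hh
  have hha0 : AnalyticAt ℂ h 0 := hha 0 (mem_ball_self one_pos)
  have hf : f =ᶠ[𝓝 0] fun z => z * exp (h z) := by
    filter_upwards [ball_mem_nhds (0:ℂ) one_pos] with z hz
    rcases eq_or_ne z 0 with rfl | hz0
    · simp [hf0]
    · rw [hexp z hz hz0, mul_div_cancel₀ _ hz0]
  have hE : ContDiffAt ℂ 3 (fun z => exp (h z)) 0 := hha0.cexp.contDiffAt
  constructor
  · rw [hf.iteratedDeriv_eq, iteratedDeriv_succ_fun_id_mul_zero (hE.of_le (by norm_num)),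
      iteratedDeriv_one, deriv_cexp hha0.differentiableAt, hh0, exp_zero]
    norm_num
  · rw [hf.iteratedDeriv_eq, iteratedDeriv_succ_fun_id_mul_zero hE,
      iteratedDeriv_two_cexp_comp hha0, hh0, exp_zero]
    norm_num

theorem MemClassF.exists_caratheodory {f : ℂ → ℂ} (hf : MemClassF f) :
    ∃ p q : ℂ → ℂ, IsCaratheodory p ∧ IsCaratheodory q ∧ deriv q 0 = 0 ∧
      iteratedDeriv 2 f 0 = deriv p 0 ∧
      2 * iteratedDeriv 3 f 0 = 2 * iteratedDeriv 2 p 0 + iteratedDeriv 2 q 0 := by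
  obtain ⟨hfa, -, hf'0, g, ⟨hga, hg0, hg'0, hgstar, hgodd⟩, hfg⟩ := hf
  set G := dslope g 0
  have hp := isCaratheodory_div_dslope hga hg0 hg'0 (hfa.deriv_of_isOpen isOpen_ball) hf'0 hfg
  have hq := isCaratheodory_div_dslope hga hg0 hg'0 (hga.deriv_of_isOpen isOpen_ball) hg'0 hgstar
  have hG : ContDiffAt ℂ 3 G 0 :=
    (hga.dslope isOpen_ball (mem_ball_self one_pos) 0 (mem_ball_self one_pos)).contDiffAt
  have hG0 : G 0 = 1 := by simp [G, hg'0]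
  have hG1 : deriv G 0 = 0 :=
    deriv_dslope_zero_eq_zero_of_odd (mem_of_superset (ball_mem_nhds 0 one_pos) hgodd)
  have hGne := dslope_zero_ne_zero_of_re_pos hg0 hg'0 hgstar
  have hcoeff (u : ℂ → ℂ) (hP : IsCaratheodory fun z => deriv u z / G z) :=
    iteratedDeriv_two_and_three_of_deriv_eq_mul
      (hP.analyticOnNhd 0 (mem_ball_self one_pos)).contDiffAt (hG.of_le (by norm_num))
      (Filter.mem_of_superset (ball_mem_nhds 0 one_pos) fun z hz =>
        (div_mul_cancel₀ (deriv u z) (hGne z hz)).symm)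
      hP.apply_zero hG0 hG1
  obtain ⟨hf2, hf3⟩ := hcoeff f hp
  obtain ⟨hg2, hg3⟩ := hcoeff g hq
  conv_lhs at hg2 => rw [← fun_id_mul_dslope_zero hg0,
    iteratedDeriv_succ_fun_id_mul_zero (hG.of_le (by norm_num)), iteratedDeriv_one, hG1]
  conv_lhs at hg3 => rw [← fun_id_mul_dslope_zero hg0, iteratedDeriv_succ_fun_id_mul_zero hG]
  refine ⟨_, _, hp, hq, by linear_combination -hg2, hf2, ?_⟩
  push_cast at hg3
  linear_combination 2 * hf3 + hg3

/-- For every `f ∈ ℱ`, the second logarithmic coefficient satisfies `|γ₂| ≤ 1/2`. -/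
theorem abs_gamma_two_le (f h : ℂ → ℂ) (hf : MemClassF f) (hh : IsLogBranch f h) :
    ‖logCoeff h 2‖ ≤ 1 / 2 := by
  obtain ⟨p, q, hp, hq, hq1, hf2, hf3⟩ := hf.exists_caratheodory
  obtain ⟨hh2, hh3⟩ := hh.iteratedDeriv_two_and_three hf.2.1
  have hγ : logCoeff h 2 = (iteratedDeriv 2 p 0 - deriv p 0 ^ 2) / 12 + deriv p 0 ^ 2 / 48
      + iteratedDeriv 2 q 0 / 24 := by
    rw [logCoeff, show ((Nat.factorial 2 : ℕ) : ℂ) = 2 by norm_num]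
    linear_combination (-1/12 : ℂ) * hh3 + (1/24 : ℂ) * hf3
      - (deriv h 0 + deriv p 0 / 2) / 8 * (hf2 - hh2)
  have hpb := hp.norm_iteratedDeriv_two_sub_sq_le
  have hqb : ‖iteratedDeriv 2 q 0‖ ≤ 4 := by
    simpa [hq1] using hq.norm_iteratedDeriv_two_sub_sq_le
  rw [hγ]
  calc _ ≤ ‖iteratedDeriv 2 p 0 - deriv p 0 ^ 2‖ / 12 + ‖deriv p 0‖ ^ 2 / 48
        + ‖iteratedDeriv 2 q 0‖ / 24 := by
        refine (norm_add₃_le ..).trans_eq ?_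
        simp [norm_pow]
    _ ≤ 1 / 2 := by nlinarith [sq_nonneg ‖deriv p 0‖]
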